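/- For every r ≥ 1, the Shirshov factorization of the Fibonacci word f_{2r} is (f_{2r-1}, f_{2r-2}) and the Shirshov factorization of f_{2r+1} is (f_{2r-1}, f_{2r}). -/
import Mathlib


variable {X : Type*} [LinearOrder X]

/-- The lexicographical order of the paper: `u <_lex v` iff the words first differ with the
letter of `u` smaller, or `v` is a proper prefix of `u`. -/
def LexLt (u v : List X) : Prop :=
  (∃ (r s t : List X) (a b : X), a < b ∧ u = r ++ a :: s ∧ v = r ++ b :: t) ∨
    (v <+: u ∧ v ≠ u)

/-- A word `u` is Lyndon if it is nonempty and `u >_lex w ++ v` for every factorization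
`u = v ++ w` with `v, w` nonempty. -/
def IsLyndon (u : List X) : Prop :=
  u ≠ [] ∧ ∀ v w : List X, u = v ++ w → v ≠ [] → w ≠ [] → LexLt (w ++ v) u

/-- `(u', u'')` is the Shirshov factorization of `u`: `u = u' ++ u''` where `u''` is the
longest proper Lyndon suffix of `u`. -/
def IsShirshov (u u1 u2 : List X) : Prop :=
  u = u1 ++ u2 ∧ u1 ≠ [] ∧ u2 ≠ [] ∧ IsLyndon u2 ∧
    ∀ s : List X, s <:+ u → s ≠ u → IsLyndon s → s.length ≤ u2.length

/-- The Fibonacci words on the two-letter alphabet `Bool` with `false < true`: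
`f 0 = [false]`, `f 1 = [true]`, `f (2r) = f (2r-1) ++ f (2r-2)`, `f (2r+1) = f (2r-1) ++ f (2r)`. -/
def fibWord : ℕ → List Bool
  | 0 => [false]
  | 1 => [true]
  | (n + 2) => if n % 2 = 0 then fibWord (n + 1) ++ fibWord n else fibWord n ++ fibWord (n + 1)

/-! ### The strict "first difference" order -/

/-- `LtD u v` : `u` and `v` first differ at a position inside both, with the letter of `u`
smaller. -/
inductive LtD : List X → List X → Prop
  | head {a b : X} (u v : List X) : a < b → LtD (a :: u) (b :: v)
  | cons {a : X} {u v : List X} : LtD u v → LtD (a :: u) (a :: v)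

theorem LtD.append_append {u v : List X} (h : LtD u v) (x y : List X) :
    LtD (u ++ x) (v ++ y) := by
  induction h with
  | head u v hab => exact LtD.head _ _ hab
  | cons h ih => exact LtD.cons ih

theorem LtD.append_left {u v : List X} (h : LtD u v) (p : List X) :
    LtD (p ++ u) (p ++ v) := by
  induction p with
  | nil => exact h
  | cons a p ih => exact LtD.cons ih

theorem LtD.cancel_left {u v : List X} (p : List X) (h : LtD (p ++ u) (p ++ v)) :
    LtD u v := by
  induction p with
  | nil => exact h
  | cons a p ih =>
    cases h with
    | head _ _ hab => exact absurd hab (lt_irrefl a)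
    | cons h => exact ih h

theorem LtD.not_nil_left {v : List X} (h : LtD [] v) : False := by cases h

theorem LtD.not_nil_right {u : List X} (h : LtD u []) : False := by cases h

theorem LtD.dec_right {u y z : List X} (h : LtD u (y ++ z)) : LtD u y ∨ y <+: u := by
  induction y generalizing u with
  | nil => exact Or.inr (List.nil_prefix)
  | cons b y ih =>
    cases h with
    | head u' v' hab => exact Or.inl (LtD.head _ _ hab)
    | cons h =>
      rcases ih h with h' | h'
      · exact Or.inl (LtD.cons h')
      · exact Or.inr (List.cons_prefix_cons.mpr ⟨rfl, h'⟩)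

theorem LtD.dec_left {x y v : List X} (h : LtD (x ++ y) v) : LtD x v ∨ x <+: v := by
  induction x generalizing v with
  | nil => exact Or.inr (List.nil_prefix)
  | cons a x ih =>
    cases h with
    | head u' v' hab => exact Or.inl (LtD.head _ _ hab)
    | cons h =>
      rcases ih h with h' | h'
      · exact Or.inl (LtD.cons h')
      · exact Or.inr (List.cons_prefix_cons.mpr ⟨rfl, h'⟩)

theorem LtD.trans {u v w : List X} (h1 : LtD u v) (h2 : LtD v w) : LtD u w := by
  induction h1 generalizing w with
  | head u' v' hab =>
    cases h2 with
    | head _ _ hbc => exact LtD.head _ _ (hab.trans hbc)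
    | cons _ => exact LtD.head _ _ hab
  | cons h ih =>
    cases h2 with
    | head _ _ hbc => exact LtD.head _ _ hbc
    | cons h2' => exact LtD.cons (ih h2')

theorem LtD.asymm {u v : List X} (h1 : LtD u v) (h2 : LtD v u) : False := by
  induction h1 with
  | head u' v' hab =>
    cases h2 with
    | head _ _ hba => exact absurd hba hab.asymm
    | cons _ => exact absurd hab (lt_irrefl _)
  | cons h ih =>
    cases h2 with
    | head _ _ hba => exact absurd hba (lt_irrefl _)
    | cons h2' => exact ih h2'

theorem LtD.irrefl {u : List X} (h : LtD u u) : False := h.asymm h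

theorem LtD.not_prefix {u v : List X} (h : LtD u v) (hp : u <+: v) : False := by
  induction h with
  | head u' v' hab =>
    exact absurd (List.cons_prefix_cons.mp hp).1 (ne_of_lt hab)
  | cons h ih => exact ih (List.cons_prefix_cons.mp hp).2

theorem LtD.not_prefix' {u v : List X} (h : LtD u v) (hp : v <+: u) : False := by
  induction h with
  | head u' v' hab =>
    exact absurd (List.cons_prefix_cons.mp hp).1 (ne_of_lt hab).symm
  | cons h ih => exact ih (List.cons_prefix_cons.mp hp).2

theorem ltd_iff_exists {u v : List X} :
    LtD u v ↔ ∃ (r s t : List X) (a b : X), a < b ∧ u = r ++ a :: s ∧ v = r ++ b :: t := by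
  constructor
  · intro h
    induction h with
    | head u' v' hab => exact ⟨[], u', v', _, _, hab, rfl, rfl⟩
    | @cons x u' v' h ih =>
      obtain ⟨r, s, t, a, b, hab, hu, hv⟩ := ih
      exact ⟨x :: r, s, t, a, b, hab, by simp [hu], by simp [hv]⟩
  · rintro ⟨r, s, t, a, b, hab, rfl, rfl⟩
    exact (LtD.head s t hab).append_left r

theorem LtD.lexLt {u v : List X} (h : LtD u v) : LexLt u v :=
  Or.inl (ltd_iff_exists.mp h)

theorem lexLt_iff {u v : List X} :
    LexLt u v ↔ LtD u v ∨ (v <+: u ∧ v ≠ u) := by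
  unfold LexLt
  rw [ltd_iff_exists]

theorem lexLt_asymm {u v : List X} (h1 : LexLt u v) (h2 : LexLt v u) : False := by
  rcases lexLt_iff.mp h1 with h1' | ⟨h1', h1e⟩ <;> rcases lexLt_iff.mp h2 with h2' | ⟨h2', h2e⟩
  · exact h1'.asymm h2'
  · exact h1'.not_prefix h2'
  · exact h2'.not_prefix h1'
  · exact h1e (h1'.eq_of_length (le_antisymm h1'.length_le h2'.length_le))

/-! ### Lyndon lemmas -/

theorem lyndon_singleton (a : X) : IsLyndon [a] := by
  refine ⟨by simp, fun v w h hv hw => ?_⟩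
  have := congrArg List.length h
  simp [List.length_append] at this
  rcases v with _ | ⟨x, v⟩
  · exact absurd rfl hv
  · rcases w with _ | ⟨y, w⟩
    · exact absurd rfl hw
    · simp at this; omega

/-- Key lemma: a nonempty proper suffix of a Lyndon word differs from it at a position
inside the suffix, with the suffix's letter smaller. -/
theorem lyndon_ltd_suffix {u c d : List X} (h : IsLyndon u) (hu : u = c ++ d)
    (hc : c ≠ []) (hd : d ≠ []) : LtD d u := by
  have h1 : LexLt (d ++ c) u := h.2 c d hu hc hd
  have hlen : (d ++ c).length = u.length := by subst hu; simp; omega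
  have h2 : LtD (d ++ c) u := by
    rcases lexLt_iff.mp h1 with h' | ⟨hp, hne⟩
    · exact h'
    · exact absurd (hp.eq_of_length (by omega)) hne
  rcases h2.dec_left with h3 | h3
  · exact h3
  · -- `d` is a prefix of `u`: border, contradiction
    exfalso
    obtain ⟨e, he⟩ := h3
    have hdu : d.length < u.length := by
      have := congrArg List.length hu
      simp at this
      rcases c with _ | ⟨x, c⟩
      · exact absurd rfl hc
      · simp at this; omega
    have heb : e ≠ [] := by
      rintro rfl
      have := congrArg List.length he
      simp at this
      omega
    have h4 : LexLt (e ++ d) u := h.2 d e he.symm hd heb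
    have hlen2 : (e ++ d).length = u.length := by
      have := congrArg List.length he
      simp at this ⊢
      omega
    have h5 : LtD (e ++ d) u := by
      rcases lexLt_iff.mp h4 with h' | ⟨hp, hne⟩
      · exact h'
      · exact absurd (hp.eq_of_length (by omega)) hne
    have hce : c.length = e.length := by
      have h6 := congrArg List.length he
      have h7 := congrArg List.length hu
      simp at h6 h7
      omega
    -- h2 : LtD (d ++ c) u, u = d ++ e gives LtD c e
    have h8 : LtD c e := by
      have := h2
      rw [← he] at this
      exact this.cancel_left d
    -- h5 : LtD (e ++ d) u = LtD (e ++ d) (c ++ d)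
    rw [hu] at h5
    rcases h5.dec_left with h9 | h9
    · rcases h9.dec_right with h10 | h10
      · exact h8.asymm h10
      · have : c = e := h10.eq_of_length hce
        subst this
        exact h8.irrefl
    · have : e <+: c := List.prefix_of_prefix_length_le h9 (List.prefix_append c d) (by omega)
      have : e = c := this.eq_of_length hce.symm
      subst this
      exact h8.irrefl

/-- Concatenation lemma, case of a strict first-difference. -/
theorem lyndon_append {u v : List X} (hu : IsLyndon u) (hv : IsLyndon v)
    (hvu : LtD v u) : IsLyndon (u ++ v) := by
  refine ⟨by simp [hu.1], fun c d hcd hc hd => ?_⟩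
  rcases List.append_eq_append_iff.mp hcd with ⟨e, he1, he2⟩ | ⟨e, he1, he2⟩
  · -- c = u ++ e, v = e ++ d  (split inside v)
    rcases eq_or_ne e [] with rfl | hne
    · simp only [List.append_nil] at he1
      simp only [List.nil_append] at he2
      obtain rfl := he1
      obtain rfl := he2
      exact (hvu.append_append _ _).lexLt
    · have h1 : LtD d v := lyndon_ltd_suffix hv he2 hne hd
      have h2 : LtD d u := h1.trans hvu
      exact (h2.append_append c v).lexLt
  · -- u = c ++ e, d = e ++ v (split inside u)
    rcases eq_or_ne e [] with rfl | hne
    · simp only [List.append_nil] at he1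
      simp only [List.nil_append] at he2
      obtain rfl := he2
      obtain rfl := he1
      exact (hvu.append_append _ _).lexLt
    · have h1 : LtD e u := lyndon_ltd_suffix hu he1 hc hne
      rw [he2]
      have h2 := (h1.append_append (v ++ c) v).lexLt
      simpa using h2

/-- Concatenation lemma, case `v = u ++ z`. -/
theorem lyndon_append' {u z : List X} (hu : IsLyndon u) (hv : IsLyndon (u ++ z))
    (hz : z ≠ []) (hzu : LtD z u) : IsLyndon (u ++ (u ++ z)) := by
  refine ⟨by simp [hu.1], fun c d hcd hc hd => ?_⟩
  rcases List.append_eq_append_iff.mp hcd with ⟨e, he1, he2⟩ | ⟨e, he1, he2⟩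
  · -- c = u ++ e, u ++ z = e ++ d (split inside v := u ++ z)
    rcases eq_or_ne e [] with rfl | hne
    · simp only [List.append_nil] at he1
      simp only [List.nil_append] at he2
      obtain rfl := he1
      obtain rfl := he2.symm
      simp only [List.append_assoc]
      exact ((hzu.append_append _ _).append_left _).lexLt
    · have h1 : LtD d (u ++ z) := lyndon_ltd_suffix hv he2 hne hd
      rcases h1.dec_right with h2 | h2
      · exact (h2.append_append c (u ++ z)).lexLt
      · obtain ⟨y, hy⟩ := h2
        rw [← hy] at h1 ⊢
        have h3 : LtD y z := h1.cancel_left u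
        have h4 : LtD y u := h3.trans hzu
        have h5 := ((h4.append_append c z).append_left u).lexLt
        simpa using h5
  · -- u = c ++ e, d = e ++ (u ++ z) (split inside first u)
    rcases eq_or_ne e [] with rfl | hne
    · simp only [List.append_nil] at he1
      simp only [List.nil_append] at he2
      obtain rfl := he1
      obtain rfl := he2
      simp only [List.append_assoc]
      exact ((hzu.append_append _ _).append_left _).lexLt
    · have h1 : LtD e u := lyndon_ltd_suffix hu he1 hc hne
      rw [he2]
      have h2 := (h1.append_append ((u ++ z) ++ c) (u ++ z)).lexLt
      simpa using h2

/-! ### Fibonacci words -/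

theorem fibWord_ne_nil : ∀ n, fibWord n ≠ []
  | 0 => by simp [fibWord]
  | 1 => by simp [fibWord]
  | (n + 2) => by
    rw [fibWord]
    split <;> simp [fibWord_ne_nil n]

theorem fibWord_even (r : ℕ) : fibWord (2 * r + 2) = fibWord (2 * r + 1) ++ fibWord (2 * r) := by
  rw [fibWord]
  rw [if_pos (by omega)]

theorem fibWord_odd (r : ℕ) : fibWord (2 * r + 3) = fibWord (2 * r + 1) ++ fibWord (2 * r + 2) := by
  have h : 2 * r + 3 = (2 * r + 1) + 2 := by omega
  rw [h, fibWord, if_neg (by omega)]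

theorem fib_ltd : ∀ r, LtD (fibWord (2 * r)) (fibWord (2 * r + 1))
  | 0 => by
    show LtD (fibWord 0) (fibWord 1)
    rw [fibWord, fibWord]
    exact LtD.head _ _ (by decide)
  | (r + 1) => by
    have ih := fib_ltd r
    rw [show 2 * (r + 1) + 1 = 2 * r + 3 from by ring, show 2 * (r + 1) = 2 * r + 2 from by ring]
    rw [fibWord_even r, fibWord_odd r, fibWord_even r]
    have h3 : LtD (fibWord (2 * r)) (fibWord (2 * r + 1) ++ fibWord (2 * r)) := by
      simpa using ih.append_append [] (fibWord (2 * r))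
    exact h3.append_left _

theorem fib_lyndon_pair : ∀ r, IsLyndon (fibWord (2 * r)) ∧ IsLyndon (fibWord (2 * r + 1))
  | 0 => by
    constructor
    · show IsLyndon (fibWord 0); rw [fibWord]; exact lyndon_singleton _
    · show IsLyndon (fibWord 1); rw [fibWord]; exact lyndon_singleton _
  | (r + 1) => by
    obtain ⟨h0, h1⟩ := fib_lyndon_pair r
    have e1 : 2 * (r + 1) = 2 * r + 2 := by ring
    have e2 : 2 * (r + 1) + 1 = 2 * r + 3 := by ring
    have heven : IsLyndon (fibWord (2 * r + 2)) := by
      rw [fibWord_even]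
      exact lyndon_append h1 h0 (fib_ltd r)
    constructor
    · rw [e1]; exact heven
    · rw [e2, fibWord_odd]
      have : IsLyndon (fibWord (2 * r + 1) ++ (fibWord (2 * r + 1) ++ fibWord (2 * r))) := by
        apply lyndon_append' h1
        · rw [← fibWord_even]; exact heven
        · exact fibWord_ne_nil _
        · exact fib_ltd r
      rwa [fibWord_even]

theorem fib_lyndon (n : ℕ) : IsLyndon (fibWord n) := by
  rcases Nat.even_or_odd n with ⟨k, hk⟩ | ⟨k, hk⟩
  · have : n = 2 * k := by omega
    rw [this]; exact (fib_lyndon_pair k).1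
  · rw [hk]; exact (fib_lyndon_pair k).2

/-- Decompose a long suffix of `u1 ++ u2`. -/
theorem suffix_decomp {u1 u2 s : List X} (hs : s <:+ u1 ++ u2)
    (hlen : u2.length < s.length) :
    ∃ w, w <:+ u1 ∧ s = w ++ u2 ∧ w ≠ [] ∧ (s ≠ u1 ++ u2 → w ≠ u1) := by
  obtain ⟨t, ht⟩ := hs
  rcases List.append_eq_append_iff.mp ht with ⟨a, ha1, ha2⟩ | ⟨a, ha1, ha2⟩
  · refine ⟨a, ⟨t, ha1.symm⟩, ha2, ?_, ?_⟩
    · rintro rfl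
      rw [ha2] at hlen
      simp at hlen
    · intro hne
      rintro rfl
      apply hne
      rw [ha2]
  · exfalso
    have := congrArg List.length ha2
    simp at this
    omega

theorem suffix_singleton {w : List X} {a : X} (h : w <:+ [a]) : w = [] ∨ w = [a] := by
  obtain ⟨p, hp⟩ := h
  rcases p with _ | ⟨x, p⟩
  · right; simpa using hp
  · left
    have h2 := congrArg List.length hp
    simp only [List.length_append, List.length_cons, List.length_singleton, List.length_nil] at h2
    exact List.eq_nil_of_length_eq_zero (by omega)

theorem fibWord_shirshov (r : ℕ) :
    IsShirshov (fibWord (2 * r + 2)) (fibWord (2 * r + 1)) (fibWord (2 * r)) ∧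
    IsShirshov (fibWord (2 * r + 3)) (fibWord (2 * r + 1)) (fibWord (2 * r + 2)) := by
  constructor
  · -- even case
    refine ⟨fibWord_even r, fibWord_ne_nil _, fibWord_ne_nil _, (fib_lyndon_pair r).1, ?_⟩
    intro s hs hsne hsl
    by_contra hlen
    push_neg at hlen
    rw [fibWord_even r] at hs hsne
    obtain ⟨w, hw, hsw, hwne, hwproper⟩ := suffix_decomp hs hlen
    have hwp : w ≠ fibWord (2 * r + 1) := hwproper hsne
    -- (i) : LtD (fibWord (2*r)) s
    have hi : LtD (fibWord (2 * r)) s :=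
      lyndon_ltd_suffix hsl hsw hwne (fibWord_ne_nil _)
    rcases r with _ | r'
    · -- r = 0 : fibWord 1 = [true], no nonempty proper suffix
      have : fibWord (2 * 0 + 1) = [true] := by rw [fibWord]
      rw [this] at hw
      rcases suffix_singleton hw with h | h
      · exact hwne h
      · rw [this] at hwp; exact hwp h
    · -- r = r' + 1
      have e1 : 2 * (r' + 1) + 1 = 2 * r' + 3 := by ring
      have e2 : 2 * (r' + 1) = 2 * r' + 2 := by ring
      rw [e1, fibWord_odd r'] at hw hwp
      rw [e2] at hi hsw
      set A := fibWord (2 * r' + 1) with hA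
      set B := fibWord (2 * r' + 2) with hB
      by_cases hlw : w.length ≤ B.length
      · have hwB : w <:+ B :=
          List.suffix_of_suffix_length_le hw (List.suffix_append A B) hlw
        by_cases hweq : w = B
        · -- s = B ++ B
          subst hweq
          have hpre : LexLt s B := by
            apply lexLt_iff.mpr
            right
            refine ⟨by rw [hsw]; exact List.prefix_append B B, ?_⟩
            intro h
            rw [hsw] at h
            have hl := congrArg List.length h
            simp only [List.length_append] at hl
            exact hwne (List.eq_nil_of_length_eq_zero (by omega))
          exact lexLt_asymm hi.lexLt hpre
        · obtain ⟨c, hc⟩ := hwB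
          have hcne : c ≠ [] := by
            rintro rfl
            simp only [List.nil_append] at hc
            exact hweq hc
          have h1 : LtD w B := lyndon_ltd_suffix (fib_lyndon _) hc.symm hcne hwne
          have h2 : LtD s B := by
            rw [hsw]
            simpa using h1.append_append B []
          exact h2.asymm hi
      · push_neg at hlw
        obtain ⟨w', hw', hww', hw'ne, hw'proper⟩ := suffix_decomp hw hlw
        have hw'p : w' ≠ A := hw'proper hwp
        obtain ⟨c, hc⟩ := hw'
        have hcne : c ≠ [] := by
          rintro rfl
          simp at hc
          exact hw'p hc
        have h1 : LtD w' A := lyndon_ltd_suffix (fib_lyndon _) hc.symm hcne hw'ne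
        have hBeq : B = A ++ fibWord (2 * r') := fibWord_even r'
        have h2 : LtD w' B := by
          rw [hBeq]
          simpa using h1.append_append [] (fibWord (2 * r'))
        have h3 : LtD s B := by
          rw [hsw, hww']
          have := h2.append_append (B ++ B) ([] : List Bool)
          simpa using this
        exact h3.asymm hi
  · -- odd case
    refine ⟨fibWord_odd r, fibWord_ne_nil _, fibWord_ne_nil _, ?_, ?_⟩
    · have e1 : 2 * r + 2 = 2 * (r + 1) := by ring
      rw [e1]; exact (fib_lyndon_pair (r + 1)).1
    intro s hs hsne hsl
    by_contra hlen
    push_neg at hlen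
    rw [fibWord_odd r] at hs hsne
    obtain ⟨w, hw, hsw, hwne, hwproper⟩ := suffix_decomp hs hlen
    have hwp : w ≠ fibWord (2 * r + 1) := hwproper hsne
    have hi : LtD (fibWord (2 * r + 2)) s :=
      lyndon_ltd_suffix hsl hsw hwne (fibWord_ne_nil _)
    obtain ⟨c, hc⟩ := hw
    have hcne : c ≠ [] := by
      rintro rfl
      simp at hc
      exact hwp hc
    have h1 : LtD w (fibWord (2 * r + 1)) :=
      lyndon_ltd_suffix (fib_lyndon _) hc.symm hcne hwne
    have h2 : LtD w (fibWord (2 * r + 2)) := by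
      rw [fibWord_even r]
      simpa using h1.append_append [] (fibWord (2 * r))
    have h3 : LtD s (fibWord (2 * r + 2)) := by
      rw [hsw]
      simpa using h2.append_append (fibWord (2 * r + 2)) ([] : List Bool)
    exact h3.asymm hi
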